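/- arXiv:1801.02425 — 4 statements merged into one kernel-verified Lean document; each statement's English description precedes it below -/
import Mathlib

section
/- Under hypotheses (h1), (g1), with N ≥ 3, a, b nonnegative continuous functions on [0,∞), and u₀ ≥ s₀, every term of the iteration sequence u_0(r) := u₀, u_n(r) := u₀ + ∫₀^r t^{1-N} ∫₀^t s^{N-1} (a(s) h(u_{n-1}(s)) + b(s) g(u_{n-1}(s))) ds dt satisfies H(u_n(r)) ≤ P̄(r) for all n ∈ ℕ and r ≥ 0, where H(t) := ∫_{u₀}^t ds/(h(s)+g(s)) and P̄(r) := ∫₀^r t^{1-N} ∫₀^t s^{N-1} (a(s) + b(s)) ds dt. -/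
/-!
Write `F = h + g`, which is positive on `[u₀, ∞)`. By induction, every iterate `u_n` is
continuous, nondecreasing in `r` and `≥ u₀`, and `u_n ≤ u_{n+1}`: the nonlinearity
`a h(u) + b g(u)` is nonnegative and nondecreasing in `u` on `[u₀, ∞)`.
Substituting `x = u_{n+1}(t)` gives `H(u_{n+1}(r)) = ∫₀^r u_{n+1}'(t) / F(u_{n+1}(t)) dt`, and for
`s ≤ t` we have `u_n(s) ≤ u_n(t) ≤ u_{n+1}(t)`, so
`a(s) h(u_n(s)) + b(s) g(u_n(s)) ≤ F(u_{n+1}(t)) (a(s) + b(s))`. Hence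
`u_{n+1}'(t) ≤ F(u_{n+1}(t)) P̄'(t)`, and integrating gives `H(u_{n+1}(r)) ≤ P̄(r)`.
-/

open MeasureTheory Filter Set Topology

noncomputable section

namespace RadialIteration

lemma intervalIntegrable_of_continuousOn_Ici {f : ℝ → ℝ} {a x y : ℝ}
    (hf : ContinuousOn f (Ici a)) (hx : a ≤ x) (hy : a ≤ y) :
    IntervalIntegrable f volume x y :=
  (hf.mono fun _ ht => (le_min hx hy).trans ht.1).intervalIntegrable

lemma continuousOn_primitive_Ici {f : ℝ → ℝ} {a : ℝ} (hf : ContinuousOn f (Ici a)) :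
    ContinuousOn (fun r => ∫ t in a..r, f t) (Ici a) := by
  intro x hx
  have hx' : a ≤ x + 1 := by linarith [mem_Ici.1 hx]
  have hIcc : ContinuousWithinAt (fun r => ∫ t in a..r, f t) (Ici a ∩ Iic (x + 1)) x := by
    rw [Ici_inter_Iic]
    refine intervalIntegral.continuousWithinAt_primitive (measure_singleton x) ?_
    rw [min_self, max_eq_right hx']
    exact intervalIntegrable_of_continuousOn_Ici hf le_rfl hx'
  exact (continuousWithinAt_inter (Iic_mem_nhds (lt_add_one x))).1 hIcc

lemma zpow_one_sub_mul_pow_le_one (N : ℕ) {t : ℝ} (ht : t ≤ 1) :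
    t ^ (1 - (N : ℤ)) * t ^ (N - 1) ≤ 1 := by
  cases N with
  | zero => simpa using ht
  | succ k =>
    rw [Nat.add_sub_cancel, show 1 - ((k + 1 : ℕ) : ℤ) = -k by push_cast; ring, zpow_neg,
      zpow_natCast]
    exact inv_mul_le_one

/-- `radialPotential N c` solves `(r^{N-1} u')' = r^{N-1} c`, `u(0) = 0`, i.e. `Δu = c` for
radial `u` on `ℝᴺ`; `radialFlux N c` is its derivative `u'`. -/
def radialFlux (N : ℕ) (c : ℝ → ℝ) (t : ℝ) : ℝ :=
  t ^ (1 - (N : ℤ)) * ∫ s in (0 : ℝ)..t, s ^ (N - 1) * c s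

def radialPotential (N : ℕ) (c : ℝ → ℝ) (r : ℝ) : ℝ :=
  ∫ t in (0 : ℝ)..r, radialFlux N c t

variable {N : ℕ} {c d : ℝ → ℝ}

@[simp]
lemma radialFlux_zero : radialFlux N c 0 = 0 := by
  simp [radialFlux]

@[simp]
lemma radialPotential_zero : radialPotential N c 0 = 0 := by
  simp [radialPotential]

lemma norm_radialFlux_le {M t : ℝ} (hM : ∀ s ∈ Icc 0 t, ‖c s‖ ≤ M) (ht₀ : 0 ≤ t)
    (ht₁ : t ≤ 1) : ‖radialFlux N c t‖ ≤ M * t := by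
  have hM₀ : 0 ≤ M := (norm_nonneg _).trans (hM 0 ⟨le_rfl, ht₀⟩)
  have hint : ‖∫ s in (0 : ℝ)..t, s ^ (N - 1) * c s‖ ≤ t ^ (N - 1) * M * |t - 0| := by
    refine intervalIntegral.norm_integral_le_of_norm_le_const fun s hs => ?_
    rw [uIoc_of_le ht₀] at hs
    rw [norm_mul, norm_pow, Real.norm_of_nonneg hs.1.le]
    exact mul_le_mul (pow_le_pow_left₀ hs.1.le hs.2 _) (hM s (Ioc_subset_Icc_self hs))
      (norm_nonneg _) (pow_nonneg ht₀ _)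
  calc ‖radialFlux N c t‖
      = t ^ (1 - (N : ℤ)) * ‖∫ s in (0 : ℝ)..t, s ^ (N - 1) * c s‖ := by
        rw [radialFlux, norm_mul, Real.norm_of_nonneg (zpow_nonneg ht₀ _)]
    _ ≤ t ^ (1 - (N : ℤ)) * (t ^ (N - 1) * M * |t - 0|) := by gcongr
    _ = (t ^ (1 - (N : ℤ)) * t ^ (N - 1)) * (M * t) := by
        rw [sub_zero, abs_of_nonneg ht₀]; ring
    _ ≤ M * t := mul_le_of_le_one_left (by positivity) (zpow_one_sub_mul_pow_le_one N ht₁)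

lemma continuousOn_radialFlux (N : ℕ) (hc : ContinuousOn c (Ici 0)) :
    ContinuousOn (radialFlux N c) (Ici 0) := by
  intro x hx
  rcases (mem_Ici.1 hx).eq_or_lt with rfl | hx₀
  · obtain ⟨M, hM⟩ := isCompact_Icc.exists_bound_of_continuousOn
      (hc.mono (Icc_subset_Ici_self : Icc (0 : ℝ) 1 ⊆ Ici 0))
    have hMt : Tendsto (fun t : ℝ => M * t) (𝓝[≥] 0) (𝓝 0) := by
      simpa using ((continuous_const_mul M).tendsto 0).mono_left nhdsWithin_le_nhds
    rw [ContinuousWithinAt, radialFlux_zero]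
    refine squeeze_zero_norm' ?_ hMt
    filter_upwards [Icc_mem_nhdsGE one_pos] with t ht
    exact norm_radialFlux_le (fun s hs => hM s ⟨hs.1, hs.2.trans ht.2⟩) ht.1 ht.2
  · exact (continuousAt_zpow₀ x _ (Or.inl hx₀.ne')).continuousWithinAt.mul
      (continuousOn_primitive_Ici ((continuous_pow _).continuousOn.mul hc) x hx)

lemma radialFlux_nonneg (hc : ∀ s ∈ Ici 0, 0 ≤ c s) {t : ℝ} (ht : 0 ≤ t) :
    0 ≤ radialFlux N c t :=
  mul_nonneg (zpow_nonneg ht _) <| intervalIntegral.integral_nonneg ht fun s hs =>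
    mul_nonneg (pow_nonneg hs.1 _) (hc s hs.1)

lemma radialFlux_mono (hc : ContinuousOn c (Ici 0)) (hd : ContinuousOn d (Ici 0)) {t : ℝ}
    (ht : 0 ≤ t) (hcd : ∀ s ∈ Icc 0 t, c s ≤ d s) : radialFlux N c t ≤ radialFlux N d t := by
  refine mul_le_mul_of_nonneg_left ?_ (zpow_nonneg ht _)
  refine intervalIntegral.integral_mono_on ht
    (intervalIntegrable_of_continuousOn_Ici ((continuous_pow _).continuousOn.mul hc) le_rfl ht)
    (intervalIntegrable_of_continuousOn_Ici ((continuous_pow _).continuousOn.mul hd) le_rfl ht)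
    fun s hs => mul_le_mul_of_nonneg_left (hcd s hs) (pow_nonneg hs.1 _)

lemma radialFlux_const_mul (G : ℝ) (t : ℝ) :
    radialFlux N (fun s => G * c s) t = G * radialFlux N c t := by
  simp only [radialFlux, mul_left_comm _ G, intervalIntegral.integral_const_mul]

lemma hasDerivAt_radialPotential (hc : ContinuousOn c (Ici 0)) {t : ℝ} (ht : 0 < t) :
    HasDerivAt (radialPotential N c) (radialFlux N c t) t := by
  have hF := continuousOn_radialFlux N hc
  exact intervalIntegral.integral_hasDerivAt_right
    (intervalIntegrable_of_continuousOn_Ici hF le_rfl ht.le)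
    ((hF.mono Ioi_subset_Ici_self).stronglyMeasurableAtFilter isOpen_Ioi t ht)
    (hF.continuousAt (Ici_mem_nhds ht))

lemma continuousOn_radialPotential (N : ℕ) (hc : ContinuousOn c (Ici 0)) :
    ContinuousOn (radialPotential N c) (Ici 0) :=
  continuousOn_primitive_Ici (continuousOn_radialFlux N hc)

lemma radialPotential_nonneg (hc : ∀ s ∈ Ici 0, 0 ≤ c s) {r : ℝ} (hr : 0 ≤ r) :
    0 ≤ radialPotential N c r :=
  intervalIntegral.integral_nonneg hr fun _ ht => radialFlux_nonneg hc ht.1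

lemma monotoneOn_radialPotential (hc : ContinuousOn c (Ici 0)) (hc₀ : ∀ s ∈ Ici 0, 0 ≤ c s) :
    MonotoneOn (radialPotential N c) (Ici 0) := by
  intro x hx y hy hxy
  have hF := continuousOn_radialFlux N hc
  rw [radialPotential, radialPotential, ← intervalIntegral.integral_add_adjacent_intervals
    (intervalIntegrable_of_continuousOn_Ici hF le_rfl hx)
    (intervalIntegrable_of_continuousOn_Ici hF hx hy)]
  exact le_add_of_nonneg_right <| intervalIntegral.integral_nonneg hxy fun t ht =>
    radialFlux_nonneg hc₀ (le_trans hx ht.1)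

lemma radialPotential_mono (hc : ContinuousOn c (Ici 0)) (hd : ContinuousOn d (Ici 0))
    (hcd : ∀ s ∈ Ici 0, c s ≤ d s) {r : ℝ} (hr : 0 ≤ r) :
    radialPotential N c r ≤ radialPotential N d r :=
  intervalIntegral.integral_mono_on hr
    (intervalIntegrable_of_continuousOn_Ici (continuousOn_radialFlux N hc) le_rfl hr)
    (intervalIntegrable_of_continuousOn_Ici (continuousOn_radialFlux N hd) le_rfl hr)
    fun _ ht => radialFlux_mono hc hd ht.1 fun s hs => hcd s hs.1

lemma integral_comp_add_radialPotential {φ : ℝ → ℝ} {u₀ r : ℝ} (hc : ContinuousOn c (Ici 0))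
    (hc₀ : ∀ s ∈ Ici 0, 0 ≤ c s) (hφ : ContinuousOn φ (Ici u₀)) (hr : 0 ≤ r) :
    ∫ x in u₀..u₀ + radialPotential N c r, φ x =
      ∫ t in (0 : ℝ)..r, φ (u₀ + radialPotential N c t) * radialFlux N c t := by
  have hIcc : uIcc (0 : ℝ) r ⊆ Ici 0 := by
    rw [uIcc_of_le hr]; exact Icc_subset_Ici_self
  have := intervalIntegral.integral_comp_mul_deriv'' (g := φ)
    (f := fun t => u₀ + radialPotential N c t) (f' := radialFlux N c)
    ((continuousOn_const.add (continuousOn_radialPotential N hc)).mono hIcc)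
    (fun t ht => ((hasDerivAt_radialPotential hc
      (by simpa [min_eq_left hr] using ht.1)).const_add u₀).hasDerivWithinAt)
    ((continuousOn_radialFlux N hc).mono hIcc)
    (hφ.mono <| image_subset_iff.2 fun t ht =>
      le_add_of_nonneg_right (radialPotential_nonneg hc₀ (hIcc ht)))
  simpa using this.symm

structure IsAdmissiblePair (h g : ℝ → ℝ) (u₀ : ℝ) : Prop where
  continuousOn_left : ContinuousOn h (Ici u₀)
  continuousOn_right : ContinuousOn g (Ici u₀)
  monotoneOn_left : MonotoneOn h (Ici u₀)
  monotoneOn_right : MonotoneOn g (Ici u₀)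
  pos_left : ∀ x ∈ Ici u₀, 0 < h x
  nonneg_right : ∀ x ∈ Ici u₀, 0 ≤ g x

structure IsAdmissibleProfile (u₀ : ℝ) (v : ℝ → ℝ) : Prop where
  continuousOn : ContinuousOn v (Ici 0)
  monotoneOn : MonotoneOn v (Ici 0)
  mapsTo : MapsTo v (Ici 0) (Ici u₀)

lemma isAdmissibleProfile_const (u₀ : ℝ) : IsAdmissibleProfile u₀ fun _ => u₀ :=
  ⟨continuousOn_const, monotoneOn_const, fun _ _ => self_mem_Ici⟩

def reaction (a b h g v : ℝ → ℝ) (s : ℝ) : ℝ :=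
  a s * h (v s) + b s * g (v s)

def iterationStep (N : ℕ) (a b h g : ℝ → ℝ) (u₀ : ℝ) (v : ℝ → ℝ) (r : ℝ) : ℝ :=
  u₀ + radialPotential N (reaction a b h g v) r

section Iteration

variable {a b h g v w : ℝ → ℝ} {u₀ : ℝ}

namespace IsAdmissiblePair

lemma add_pos (hp : IsAdmissiblePair h g u₀) {x : ℝ} (hx : u₀ ≤ x) : 0 < h x + g x :=
  add_pos_of_pos_of_nonneg (hp.pos_left x hx) (hp.nonneg_right x hx)

lemma mul_add_mul_le (hp : IsAdmissiblePair h g u₀) {α β x y : ℝ} (hα : 0 ≤ α) (hβ : 0 ≤ β)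
    (hx : u₀ ≤ x) (hxy : x ≤ y) : α * h x + β * g x ≤ (h y + g y) * (α + β) := by
  have hy : u₀ ≤ y := hx.trans hxy
  have hh : h x ≤ h y + g y :=
    (hp.monotoneOn_left hx hy hxy).trans (le_add_of_nonneg_right (hp.nonneg_right y hy))
  have hg : g x ≤ h y + g y :=
    (hp.monotoneOn_right hx hy hxy).trans (le_add_of_nonneg_left (hp.pos_left y hy).le)
  calc α * h x + β * g x ≤ α * (h y + g y) + β * (h y + g y) := by gcongr
    _ = (h y + g y) * (α + β) := by ring

end IsAdmissiblePair

lemma continuousOn_reaction (ha : ContinuousOn a (Ici 0)) (hb : ContinuousOn b (Ici 0))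
    (hp : IsAdmissiblePair h g u₀) (hv : ContinuousOn v (Ici 0))
    (hvu : MapsTo v (Ici 0) (Ici u₀)) : ContinuousOn (reaction a b h g v) (Ici 0) :=
  (ha.mul (hp.continuousOn_left.comp hv hvu)).add (hb.mul (hp.continuousOn_right.comp hv hvu))

lemma reaction_nonneg (ha₀ : ∀ s ∈ Ici (0 : ℝ), 0 ≤ a s) (hb₀ : ∀ s ∈ Ici (0 : ℝ), 0 ≤ b s)
    (hp : IsAdmissiblePair h g u₀) (hvu : MapsTo v (Ici 0) (Ici u₀)) :
    ∀ s ∈ Ici 0, 0 ≤ reaction a b h g v s := fun s hs =>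
  add_nonneg (mul_nonneg (ha₀ s hs) (hp.pos_left _ (hvu hs)).le)
    (mul_nonneg (hb₀ s hs) (hp.nonneg_right _ (hvu hs)))

lemma reaction_mono (ha₀ : ∀ s ∈ Ici (0 : ℝ), 0 ≤ a s) (hb₀ : ∀ s ∈ Ici (0 : ℝ), 0 ≤ b s)
    (hp : IsAdmissiblePair h g u₀) (hvu : MapsTo v (Ici 0) (Ici u₀))
    (hvw : ∀ s ∈ Ici 0, v s ≤ w s) : ∀ s ∈ Ici 0, reaction a b h g v s ≤ reaction a b h g w s :=
  fun s hs =>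
    have hw : u₀ ≤ w s := (hvu hs).trans (hvw s hs)
    add_le_add (mul_le_mul_of_nonneg_left (hp.monotoneOn_left (hvu hs) hw (hvw s hs)) (ha₀ s hs))
      (mul_le_mul_of_nonneg_left (hp.monotoneOn_right (hvu hs) hw (hvw s hs)) (hb₀ s hs))

lemma IsAdmissibleProfile.iterationStep (ha : ContinuousOn a (Ici 0))
    (ha₀ : ∀ s ∈ Ici (0 : ℝ), 0 ≤ a s) (hb : ContinuousOn b (Ici 0))
    (hb₀ : ∀ s ∈ Ici (0 : ℝ), 0 ≤ b s) (hp : IsAdmissiblePair h g u₀)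
    (hv : IsAdmissibleProfile u₀ v) : IsAdmissibleProfile u₀ (iterationStep N a b h g u₀ v) := by
  have hc := continuousOn_reaction ha hb hp hv.continuousOn hv.mapsTo
  have hc₀ := reaction_nonneg ha₀ hb₀ hp hv.mapsTo
  exact ⟨continuousOn_const.add (continuousOn_radialPotential N hc),
    fun x hx y hy hxy => add_le_add_right (monotoneOn_radialPotential hc hc₀ hx hy hxy) u₀,
    fun r hr => le_add_of_nonneg_right (radialPotential_nonneg hc₀ hr)⟩

lemma iterationStep_mono (ha : ContinuousOn a (Ici 0)) (ha₀ : ∀ s ∈ Ici (0 : ℝ), 0 ≤ a s)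
    (hb : ContinuousOn b (Ici 0)) (hb₀ : ∀ s ∈ Ici (0 : ℝ), 0 ≤ b s)
    (hp : IsAdmissiblePair h g u₀) (hv : IsAdmissibleProfile u₀ v)
    (hw : IsAdmissibleProfile u₀ w) (hvw : ∀ s ∈ Ici 0, v s ≤ w s) :
    ∀ r ∈ Ici 0, iterationStep N a b h g u₀ v r ≤ iterationStep N a b h g u₀ w r := fun _ hr =>
  add_le_add_right (radialPotential_mono (continuousOn_reaction ha hb hp hv.continuousOn hv.mapsTo)
    (continuousOn_reaction ha hb hp hw.continuousOn hw.mapsTo)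
    (reaction_mono ha₀ hb₀ hp hv.mapsTo hvw) hr) u₀

lemma integral_inv_iterationStep_le (ha : ContinuousOn a (Ici 0))
    (ha₀ : ∀ s ∈ Ici (0 : ℝ), 0 ≤ a s) (hb : ContinuousOn b (Ici 0))
    (hb₀ : ∀ s ∈ Ici (0 : ℝ), 0 ≤ b s) (hp : IsAdmissiblePair h g u₀)
    (hv : IsAdmissibleProfile u₀ v) (hv_le : ∀ s ∈ Ici 0, v s ≤ iterationStep N a b h g u₀ v s)
    {r : ℝ} (hr : 0 ≤ r) :
    ∫ x in u₀..iterationStep N a b h g u₀ v r, 1 / (h x + g x) ≤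
      radialPotential N (fun s => a s + b s) r := by
  have hc := continuousOn_reaction ha hb hp hv.continuousOn hv.mapsTo
  have hc₀ := reaction_nonneg ha₀ hb₀ hp hv.mapsTo
  have hab : ContinuousOn (fun s => a s + b s) (Ici 0) := ha.add hb
  have hφ : ContinuousOn (fun x => 1 / (h x + g x)) (Ici u₀) :=
    continuousOn_const.div (hp.continuousOn_left.add hp.continuousOn_right)
      fun x hx => (hp.add_pos hx).ne'
  set T := iterationStep N a b h g u₀ v
  have hT : IsAdmissibleProfile u₀ T := hv.iterationStep ha ha₀ hb hb₀ hp
  have hflux : ∀ t ∈ Icc 0 r, radialFlux N (reaction a b h g v) t ≤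
      (h (T t) + g (T t)) * radialFlux N (fun s => a s + b s) t := fun t ht => by
    rw [← radialFlux_const_mul]
    exact radialFlux_mono hc (continuousOn_const.mul hab) ht.1 fun s hs =>
      hp.mul_add_mul_le (ha₀ s hs.1) (hb₀ s hs.1) (hv.mapsTo hs.1)
        ((hv.monotoneOn hs.1 ht.1 hs.2).trans (hv_le t ht.1))
  refine (integral_comp_add_radialPotential hc hc₀ hφ hr).trans_le <|
    intervalIntegral.integral_mono_on hr
      (intervalIntegrable_of_continuousOn_Ici
        ((hφ.comp hT.continuousOn hT.mapsTo).mul (continuousOn_radialFlux N hc)) le_rfl hr)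
      (intervalIntegrable_of_continuousOn_Ici (continuousOn_radialFlux N hab) le_rfl hr)
      fun t ht => ?_
  calc 1 / (h (T t) + g (T t)) * radialFlux N (reaction a b h g v) t
      = radialFlux N (reaction a b h g v) t / (h (T t) + g (T t)) := one_div_mul_eq_div _ _
    _ ≤ radialFlux N (fun s => a s + b s) t :=
        (div_le_iff₀' (hp.add_pos (hT.mapsTo ht.1))).2 (hflux t ht)

lemma isAdmissibleProfile_and_le_succ (ha : ContinuousOn a (Ici 0))
    (ha₀ : ∀ s ∈ Ici (0 : ℝ), 0 ≤ a s) (hb : ContinuousOn b (Ici 0))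
    (hb₀ : ∀ s ∈ Ici (0 : ℝ), 0 ≤ b s) (hp : IsAdmissiblePair h g u₀) {U : ℕ → ℝ → ℝ}
    (hU₀ : U 0 = fun _ => u₀) (hU : ∀ n, U (n + 1) = iterationStep N a b h g u₀ (U n))
    (n : ℕ) : IsAdmissibleProfile u₀ (U n) ∧ ∀ s ∈ Ici 0, U n s ≤ U (n + 1) s := by
  induction n with
  | zero =>
    have h₀ : IsAdmissibleProfile u₀ (U 0) := hU₀ ▸ isAdmissibleProfile_const u₀
    refine ⟨h₀, fun s hs => ?_⟩
    rw [hU, hU₀]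
    exact (isAdmissibleProfile_const u₀).iterationStep ha ha₀ hb hb₀ hp |>.mapsTo hs
  | succ n ih =>
    have hn : IsAdmissibleProfile u₀ (U (n + 1)) := hU n ▸ ih.1.iterationStep ha ha₀ hb hb₀ hp
    have hle := iterationStep_mono (N := N) ha ha₀ hb hb₀ hp ih.1 hn ih.2
    rw [← hU n, ← hU (n + 1)] at hle
    exact ⟨hn, hle⟩

end Iteration

lemma isAdmissiblePair_of_le {h g : ℝ → ℝ} {s₀ u₀ : ℝ} (hs₀ : 0 < s₀) (hu₀ : s₀ ≤ u₀)
    (hh_cont : ContinuousOn h (Ici 0)) (hh_mono : MonotoneOn h (Ici 0))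
    (hh_pos : ∀ s : ℝ, 0 < s → 0 < h s) (hg_cont : ContinuousOn g (Ioi 0))
    (hg_mono : MonotoneOn g (Ioi s₀)) (hg_s₀ : g s₀ = 0) (hg_pos : ∀ s ∈ Ioi s₀, 0 < g s) :
    IsAdmissiblePair h g u₀ := by
  have hu₀_pos : 0 < u₀ := hs₀.trans_le hu₀
  have hIci : Ici u₀ ⊆ Ici 0 := Ici_subset_Ici.2 hu₀_pos.le
  have hg_mono' : MonotoneOn g (Ici s₀) := by
    rw [← Ioi_insert]
    refine monotoneOn_insert_iff.2 ⟨fun x hx hxs => absurd hxs (not_le.2 hx),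
      fun x hx _ => hg_s₀ ▸ (hg_pos x hx).le, hg_mono⟩
  refine ⟨hh_cont.mono hIci, hg_cont.mono fun x hx => hu₀_pos.trans_le hx,
    hh_mono.mono hIci, hg_mono'.mono (Ici_subset_Ici.2 hu₀),
    fun x hx => hh_pos x (hu₀_pos.trans_le hx), fun x hx => ?_⟩
  rcases (hu₀.trans hx).eq_or_lt with rfl | hlt
  exacts [hg_s₀.ge, (hg_pos x hlt).le]

end RadialIteration

open RadialIteration

theorem stmt3_general (N : ℕ)
    (a b : ℝ → ℝ)
    (ha_cont : ContinuousOn a (Set.Ici 0)) (ha_nonneg : ∀ s ∈ Set.Ici (0:ℝ), 0 ≤ a s)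
    (hb_cont : ContinuousOn b (Set.Ici 0)) (hb_nonneg : ∀ s ∈ Set.Ici (0:ℝ), 0 ≤ b s)
    (h g : ℝ → ℝ) (s₀ : ℝ) (hs₀ : 0 < s₀)
    (hh_cont : ContinuousOn h (Set.Ici 0)) (hh_mono : MonotoneOn h (Set.Ici 0))
    (hh_pos : ∀ s : ℝ, 0 < s → 0 < h s)
    (hg_cont : ContinuousOn g (Set.Ioi 0))
    (hg_mono : MonotoneOn g (Set.Ioi s₀))
    (hg_s0 : g s₀ = 0)
    (hg_pos : ∀ s ∈ Set.Ioi s₀, 0 < g s)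
    (u₀ : ℝ) (hu₀ : s₀ ≤ u₀)
    (U : ℕ → ℝ → ℝ) (hU0 : ∀ r : ℝ, U 0 r = u₀)
    (hUrec : ∀ n : ℕ, ∀ r : ℝ, U (n + 1) r =
      u₀ + ∫ t in (0:ℝ)..r, t ^ (1 - (N:ℤ)) *
        ∫ s in (0:ℝ)..t, s ^ (N - 1) * (a s * h (U n s) + b s * g (U n s)))
    :
    ∀ n : ℕ, ∀ r : ℝ, 0 ≤ r →
      (∫ s in u₀..(U n r), 1 / (h s + g s)) ≤
        ∫ t in (0:ℝ)..r, t ^ (1 - (N:ℤ)) *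
          ∫ s in (0:ℝ)..t, s ^ (N - 1) * (a s + b s) := by
  have hp : IsAdmissiblePair h g u₀ :=
    isAdmissiblePair_of_le hs₀ hu₀ hh_cont hh_mono hh_pos hg_cont hg_mono hg_s0 hg_pos
  have hU : ∀ n, U (n + 1) = iterationStep N a b h g u₀ (U n) := fun n => funext (hUrec n)
  have hiter := isAdmissibleProfile_and_le_succ ha_cont ha_nonneg hb_cont hb_nonneg hp
    (funext hU0) hU
  intro n r hr
  cases n with
  | zero =>
    rw [hU0, intervalIntegral.integral_same]
    exact radialPotential_nonneg (fun s hs => add_nonneg (ha_nonneg s hs) (hb_nonneg s hs)) hr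
  | succ n =>
    rw [hU n]
    exact integral_inv_iterationStep_le ha_cont ha_nonneg hb_cont hb_nonneg hp (hiter n).1
      (hU n ▸ (hiter n).2) hr

theorem stmt3 (N : ℕ) (hN : 3 ≤ N)
    (a b : ℝ → ℝ)
    (ha_cont : ContinuousOn a (Set.Ici 0)) (ha_nonneg : ∀ s ∈ Set.Ici (0:ℝ), 0 ≤ a s)
    (hb_cont : ContinuousOn b (Set.Ici 0)) (hb_nonneg : ∀ s ∈ Set.Ici (0:ℝ), 0 ≤ b s)
    (h g : ℝ → ℝ) (s₀ : ℝ) (hs₀ : 0 < s₀)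
    (hh_cont : ContinuousOn h (Set.Ici 0)) (hh_mono : MonotoneOn h (Set.Ici 0))
    (hh_nonneg : ∀ s ∈ Set.Ici (0:ℝ), 0 ≤ h s)
    (hh0 : h 0 = 0) (hh_pos : ∀ s : ℝ, 0 < s → 0 < h s)
    (hg_cont : ContinuousOn g (Set.Ioi 0))
    (hg_mono : MonotoneOn g (Set.Ioi s₀))
    (hg_lim : Filter.Tendsto g (nhdsWithin 0 (Set.Ioi 0)) (nhds 0))
    (hg_s0 : g s₀ = 0)
    (hg_neg : ∀ s ∈ Set.Ioo 0 s₀, g s < 0)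
    (hg_pos : ∀ s ∈ Set.Ioi s₀, 0 < g s)
    (u₀ : ℝ) (hu₀ : s₀ ≤ u₀)
    (U : ℕ → ℝ → ℝ) (hU0 : ∀ r : ℝ, U 0 r = u₀)
    (hUrec : ∀ n : ℕ, ∀ r : ℝ, U (n + 1) r =
      u₀ + ∫ t in (0:ℝ)..r, t ^ (1 - (N:ℤ)) *
        ∫ s in (0:ℝ)..t, s ^ (N - 1) * (a s * h (U n s) + b s * g (U n s)))
    :
    ∀ n : ℕ, ∀ r : ℝ, 0 ≤ r →
      (∫ s in u₀..(U n r), 1 / (h s + g s)) ≤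
        ∫ t in (0:ℝ)..r, t ^ (1 - (N:ℤ)) *
          ∫ s in (0:ℝ)..t, s ^ (N - 1) * (a s + b s) :=
  stmt3_general N a b ha_cont ha_nonneg hb_cont hb_nonneg h g s₀ hs₀ hh_cont hh_mono hh_pos hg_cont
    hg_mono hg_s0 hg_pos u₀ hu₀ U hU0 hUrec
end
end

section
/- Under hypotheses (h1), (g1), with N ≥ 3, a, b nonnegative continuous functions on [0,∞), and u₀ ≥ s₀, let u ∈ C²([0,∞)) with u ≥ u₀ satisfy u(r) = u₀ + ∫₀^r t^{1-N} ∫₀^t s^{N-1} (a(s) h(u(s)) + b(s) g(u(s))) ds dt. Then u(r) ≥ u₀ + P̲(r) for all r ≥ 0, where P̲(r) := ∫₀^r t^{1-N} ∫₀^t s^{N-1} m(s) ds dt and m(s) := a(s) h(u₀) if g(u₀) = 0, and m(s) := (a(s)+b(s)) · min{h(u₀), g(u₀)} if g(u₀) ≠ 0. Consequently, if P̲(r) → ∞ as r → ∞, then u(r) → ∞ as r → ∞, i.e., u is a large solution. -/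
/-! Since `u ≥ u₀ ≥ s₀` and `h`, `g` are nondecreasing there (with `g ≥ 0` on `[s₀, ∞)`), the
forcing term `a h(u) + b g(u)` dominates `m` pointwise on `[0, ∞)`. The radial potential
`φ ↦ ∫₀^r t^{1-N} ∫₀^t s^{N-1} φ` is monotone in `φ`, so the integral equation for `u` gives
`u ≥ u₀ + P̲`, and `u → ∞` whenever `P̲ → ∞`. -/

open MeasureTheory Filter Set

noncomputable section

def radialIntegrand (N : ℕ) (φ : ℝ → ℝ) (t : ℝ) : ℝ :=
  t ^ (1 - (N : ℤ)) * ∫ s in (0 : ℝ)..t, s ^ (N - 1) * φ s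

def radialPotential (N : ℕ) (φ : ℝ → ℝ) (r : ℝ) : ℝ :=
  ∫ t in (0 : ℝ)..r, radialIntegrand N φ t

end

section RadialPotential

variable {N : ℕ} {φ ψ : ℝ → ℝ}

lemma zpow_one_sub_natCast_mul_pow_pred (hN : 1 ≤ N) {t : ℝ} (ht : t ≠ 0) :
    t ^ (1 - (N : ℤ)) * t ^ (N - 1) = 1 := by
  have hexp : 1 - (N : ℤ) = -((N - 1 : ℕ) : ℤ) := by omega
  rw [hexp, zpow_neg, zpow_natCast, inv_mul_cancel₀ (pow_ne_zero _ ht)]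

lemma norm_radialIntegrand_le (hN : 1 ≤ N) {t M : ℝ} (ht : 0 < t)
    (hM : ∀ s ∈ Icc 0 t, ‖φ s‖ ≤ M) : ‖radialIntegrand N φ t‖ ≤ M * t := by
  have hinner : ‖∫ s in (0 : ℝ)..t, s ^ (N - 1) * φ s‖ ≤ t ^ (N - 1) * M * |t - 0| := by
    refine intervalIntegral.norm_integral_le_of_norm_le_const fun s hs => ?_
    rw [uIoc_of_le ht.le] at hs
    rw [norm_mul, Real.norm_eq_abs, abs_of_nonneg (pow_nonneg hs.1.le _)]
    exact mul_le_mul (pow_le_pow_left₀ hs.1.le hs.2 _) (hM s ⟨hs.1.le, hs.2⟩)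
      (norm_nonneg _) (pow_nonneg ht.le _)
  calc ‖radialIntegrand N φ t‖
      = t ^ (1 - (N : ℤ)) * ‖∫ s in (0 : ℝ)..t, s ^ (N - 1) * φ s‖ := by
        rw [radialIntegrand, norm_mul, Real.norm_eq_abs, abs_of_nonneg (zpow_nonneg ht.le _)]
    _ ≤ t ^ (1 - (N : ℤ)) * (t ^ (N - 1) * M * |t - 0|) :=
        mul_le_mul_of_nonneg_left hinner (zpow_nonneg ht.le _)
    _ = M * t := by
        rw [sub_zero, abs_of_nonneg ht.le]
        linear_combination (M * t) * zpow_one_sub_natCast_mul_pow_pred hN ht.ne'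

lemma intervalIntegrable_radialIntegrand (hN : 1 ≤ N) {r : ℝ} (hr : 0 ≤ r)
    (hφ : ContinuousOn φ (Icc 0 r)) : IntervalIntegrable (radialIntegrand N φ) volume 0 r := by
  obtain ⟨M, hM⟩ := isCompact_Icc.exists_bound_of_continuousOn hφ
  have hprimitive : ContinuousOn (fun t => ∫ s in (0 : ℝ)..t, s ^ (N - 1) * φ s) (Icc 0 r) := by
    have := intervalIntegral.continuousOn_primitive_interval (a := (0 : ℝ)) (b := r)
      (μ := volume) (f := fun s => s ^ (N - 1) * φ s)
      (by rw [uIcc_of_le hr]; exact ((continuous_pow _).continuousOn.mul hφ).integrableOn_Icc)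
    rwa [uIcc_of_le hr] at this
  have hcont : ContinuousOn (radialIntegrand N φ) (Ioc 0 r) :=
    (continuousOn_id.zpow₀ _ fun t ht => Or.inl ht.1.ne').mul
      (hprimitive.mono Ioc_subset_Icc_self)
  rw [intervalIntegrable_iff_integrableOn_Ioc_of_le hr]
  refine Integrable.mono' (g := fun _ => M * r) (integrableOn_const measure_Ioc_lt_top.ne)
    (hcont.aestronglyMeasurable measurableSet_Ioc)
    ((ae_restrict_iff' measurableSet_Ioc).mpr (ae_of_all _ fun t ht => ?_))
  have hM0 : 0 ≤ M := (norm_nonneg _).trans (hM 0 ⟨le_rfl, hr⟩)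
  exact (norm_radialIntegrand_le hN ht.1 fun s hs => hM s ⟨hs.1, hs.2.trans ht.2⟩).trans
    (mul_le_mul_of_nonneg_left ht.2 hM0)

lemma radialPotential_mono (hN : 1 ≤ N) {r : ℝ} (hr : 0 ≤ r)
    (hφ : ContinuousOn φ (Icc 0 r)) (hψ : ContinuousOn ψ (Icc 0 r))
    (hle : ∀ s ∈ Icc 0 r, φ s ≤ ψ s) : radialPotential N φ r ≤ radialPotential N ψ r := by
  refine intervalIntegral.integral_mono_on hr (intervalIntegrable_radialIntegrand hN hr hφ)
    (intervalIntegrable_radialIntegrand hN hr hψ) fun t ht => ?_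
  have hsub : uIcc 0 t ⊆ Icc 0 r := by
    rw [uIcc_of_le ht.1]; exact Icc_subset_Icc_right ht.2
  refine mul_le_mul_of_nonneg_left ?_ (zpow_nonneg ht.1 _)
  refine intervalIntegral.integral_mono_on ht.1
    (((continuous_pow _).continuousOn.mul (hφ.mono hsub))).intervalIntegrable
    (((continuous_pow _).continuousOn.mul (hψ.mono hsub))).intervalIntegrable fun s hs => ?_
  exact mul_le_mul_of_nonneg_left (hle s ⟨hs.1, hs.2.trans ht.2⟩) (pow_nonneg hs.1 _)

end RadialPotential

lemma lowerForcing_le_forcing {a b : ℝ} {h g : ℝ → ℝ} {s₀ u₀ v : ℝ} (ha : 0 ≤ a) (hb : 0 ≤ b)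
    (hh_mono : MonotoneOn h (Ici 0)) (hg_mono : MonotoneOn g (Ioi s₀)) (hg_s0 : g s₀ = 0)
    (hg_pos : ∀ s ∈ Ioi s₀, 0 < g s) (hu₀_nonneg : 0 ≤ u₀) (hu₀ : s₀ ≤ u₀) (hv : u₀ ≤ v) :
    (if g u₀ = 0 then a * h u₀ else (a + b) * min (h u₀) (g u₀)) ≤ a * h v + b * g v := by
  have hh_le : h u₀ ≤ h v := hh_mono hu₀_nonneg (hu₀_nonneg.trans hv) hv
  split_ifs with hgu₀
  · have hgv : 0 ≤ g v := by
      rcases (hu₀.trans hv).eq_or_lt with heq | hlt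
      · rw [← heq, hg_s0]
      · exact (hg_pos v hlt).le
    nlinarith [mul_le_mul_of_nonneg_left hh_le ha, mul_nonneg hb hgv]
  · have hs₀u₀ : s₀ < u₀ := hu₀.lt_of_ne fun heq => hgu₀ (heq ▸ hg_s0)
    have hg_le : g u₀ ≤ g v := hg_mono hs₀u₀ (hs₀u₀.trans_le hv) hv
    nlinarith [mul_le_mul_of_nonneg_left ((min_le_left (h u₀) (g u₀)).trans hh_le) ha,
      mul_le_mul_of_nonneg_left ((min_le_right (h u₀) (g u₀)).trans hg_le) hb]

theorem stmt7_general (N : ℕ) (hN : 3 ≤ N)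
    (a b : ℝ → ℝ)
    (ha_cont : ContinuousOn a (Set.Ici 0)) (ha_nonneg : ∀ s ∈ Set.Ici (0:ℝ), 0 ≤ a s)
    (hb_cont : ContinuousOn b (Set.Ici 0)) (hb_nonneg : ∀ s ∈ Set.Ici (0:ℝ), 0 ≤ b s)
    (h g : ℝ → ℝ) (s₀ : ℝ) (hs₀ : 0 < s₀)
    (hh_cont : ContinuousOn h (Set.Ici 0)) (hh_mono : MonotoneOn h (Set.Ici 0))
    (hg_cont : ContinuousOn g (Set.Ioi 0))
    (hg_mono : MonotoneOn g (Set.Ioi s₀))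
    (hg_s0 : g s₀ = 0)
    (hg_pos : ∀ s ∈ Set.Ioi s₀, 0 < g s)
    (u₀ : ℝ) (hu₀ : s₀ ≤ u₀)
    (u u' : ℝ → ℝ)
    (hu' : ∀ r ∈ Set.Ici (0:ℝ), HasDerivWithinAt u (u' r) (Set.Ici 0) r)
    (hu_ge : ∀ r ∈ Set.Ici (0:ℝ), u₀ ≤ u r)
    (hint : ∀ r : ℝ, 0 ≤ r → u r =
      u₀ + ∫ t in (0:ℝ)..r, t ^ (1 - (N:ℤ)) *
        ∫ s in (0:ℝ)..t, s ^ (N - 1) * (a s * h (u s) + b s * g (u s)))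
    (m : ℝ → ℝ)
    (hm : ∀ s : ℝ, m s = if g u₀ = 0 then a s * h u₀
      else (a s + b s) * min (h u₀) (g u₀)) :
    (∀ r : ℝ, 0 ≤ r →
      u₀ + (∫ t in (0:ℝ)..r, t ^ (1 - (N:ℤ)) *
        ∫ s in (0:ℝ)..t, s ^ (N - 1) * m s) ≤ u r) ∧
    (Filter.Tendsto (fun r : ℝ => ∫ t in (0:ℝ)..r, t ^ (1 - (N:ℤ)) *
        ∫ s in (0:ℝ)..t, s ^ (N - 1) * m s) Filter.atTop Filter.atTop →
      Filter.Tendsto u Filter.atTop Filter.atTop) := by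
  have hu₀_pos : 0 < u₀ := hs₀.trans_le hu₀
  have hu_cont : ContinuousOn u (Ici 0) := fun r hr => (hu' r hr).continuousWithinAt
  have hF_cont : ContinuousOn (fun s => a s * h (u s) + b s * g (u s)) (Ici 0) :=
    (ha_cont.mul (hh_cont.comp hu_cont fun s hs => hu₀_pos.le.trans (hu_ge s hs))).add
      (hb_cont.mul (hg_cont.comp hu_cont fun s hs => hu₀_pos.trans_le (hu_ge s hs)))
  have hm_cont : ContinuousOn m (Ici 0) := by
    rw [funext hm]
    split_ifs
    exacts [ha_cont.mul continuousOn_const, (ha_cont.add hb_cont).mul continuousOn_const]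
  have hlower : ∀ r : ℝ, 0 ≤ r → u₀ + radialPotential N m r ≤ u r := fun r hr => by
    rw [hint r hr, add_le_add_iff_left]
    refine radialPotential_mono (by omega) hr (hm_cont.mono Icc_subset_Ici_self)
      (hF_cont.mono Icc_subset_Ici_self) fun s hs => ?_
    rw [hm s]
    exact lowerForcing_le_forcing (ha_nonneg s hs.1) (hb_nonneg s hs.1) hh_mono hg_mono hg_s0 hg_pos
      hu₀_pos.le hu₀ (hu_ge s hs.1)
  refine ⟨hlower, fun hP => ?_⟩
  refine tendsto_atTop_mono' _ ?_ (tendsto_atTop_add_const_left _ u₀ hP)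
  filter_upwards [eventually_ge_atTop 0] with r hr using hlower r hr

theorem stmt7 (N : ℕ) (hN : 3 ≤ N)
    (a b : ℝ → ℝ)
    (ha_cont : ContinuousOn a (Set.Ici 0)) (ha_nonneg : ∀ s ∈ Set.Ici (0:ℝ), 0 ≤ a s)
    (hb_cont : ContinuousOn b (Set.Ici 0)) (hb_nonneg : ∀ s ∈ Set.Ici (0:ℝ), 0 ≤ b s)
    (h g : ℝ → ℝ) (s₀ : ℝ) (hs₀ : 0 < s₀)
    (hh_cont : ContinuousOn h (Set.Ici 0)) (hh_mono : MonotoneOn h (Set.Ici 0))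
    (hh_nonneg : ∀ s ∈ Set.Ici (0:ℝ), 0 ≤ h s)
    (hh0 : h 0 = 0) (hh_pos : ∀ s : ℝ, 0 < s → 0 < h s)
    (hg_cont : ContinuousOn g (Set.Ioi 0))
    (hg_mono : MonotoneOn g (Set.Ioi s₀))
    (hg_lim : Filter.Tendsto g (nhdsWithin 0 (Set.Ioi 0)) (nhds 0))
    (hg_s0 : g s₀ = 0)
    (hg_neg : ∀ s ∈ Set.Ioo 0 s₀, g s < 0)
    (hg_pos : ∀ s ∈ Set.Ioi s₀, 0 < g s)
    (u₀ : ℝ) (hu₀ : s₀ ≤ u₀)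
    (u u' u'' : ℝ → ℝ)
    (hu' : ∀ r ∈ Set.Ici (0:ℝ), HasDerivWithinAt u (u' r) (Set.Ici 0) r)
    (hu'' : ∀ r ∈ Set.Ici (0:ℝ), HasDerivWithinAt u' (u'' r) (Set.Ici 0) r)
    (hu''_cont : ContinuousOn u'' (Set.Ici 0))
    (hu_ge : ∀ r ∈ Set.Ici (0:ℝ), u₀ ≤ u r)
    (hint : ∀ r : ℝ, 0 ≤ r → u r =
      u₀ + ∫ t in (0:ℝ)..r, t ^ (1 - (N:ℤ)) *
        ∫ s in (0:ℝ)..t, s ^ (N - 1) * (a s * h (u s) + b s * g (u s)))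
    (m : ℝ → ℝ)
    (hm : ∀ s : ℝ, m s = if g u₀ = 0 then a s * h u₀
      else (a s + b s) * min (h u₀) (g u₀)) :
    (∀ r : ℝ, 0 ≤ r →
      u₀ + (∫ t in (0:ℝ)..r, t ^ (1 - (N:ℤ)) *
        ∫ s in (0:ℝ)..t, s ^ (N - 1) * m s) ≤ u r) ∧
    (Filter.Tendsto (fun r : ℝ => ∫ t in (0:ℝ)..r, t ^ (1 - (N:ℤ)) *
        ∫ s in (0:ℝ)..t, s ^ (N - 1) * m s) Filter.atTop Filter.atTop →
      Filter.Tendsto u Filter.atTop Filter.atTop) :=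
  stmt7_general N hN a b ha_cont ha_nonneg hb_cont hb_nonneg h g s₀ hs₀ hh_cont hh_mono hg_cont
    hg_mono hg_s0 hg_pos u₀ hu₀ u u' hu' hu_ge hint m hm
end

section
/- Under hypotheses (h1), (g1), with N ≥ 3, a, b nonnegative continuous NONDECREASING functions on [0,∞), and u₀ ≥ s₀, let u ∈ C²([0,∞)) be a nondecreasing solution with u ≥ u₀ of (r^{N-1} u'(r))' = r^{N-1}(a(r) h(u(r)) + b(r) g(u(r))) for r > 0, u(0) = u₀, u'(0) = 0. Then u is convex: u''(r) ≥ 0 for all r ≥ 0; more precisely u''(r) ≥ (1/N)(a(r) h(u(r)) + b(r) g(u(r))) for all r > 0. -/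
open MeasureTheory Set

/-!
Integrating the radial equation from `0` gives `r^(N-1) u'(r) = ∫₀ʳ t^(N-1) f(t) dt` for the
source `f = a·h(u) + b·g(u)`. As `u ≥ s₀` is nondecreasing, `f` is nonnegative and nondecreasing,
so the integral is at most `r^N f(r) / N`, that is `u'(r) ≤ r f(r) / N`. Expanding the equation as
`u'' = f - (N-1) u' / r` then gives `u'' ≥ f / N ≥ 0` for `r > 0`, and at `r = 0` by continuity.
-/

section RadialSource

variable {a b h g u : ℝ → ℝ} {s t : Set ℝ}

def radialSource (a b h g u : ℝ → ℝ) (r : ℝ) : ℝ := a r * h (u r) + b r * g (u r)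

theorem radialSource_nonneg (ha : ∀ r ∈ s, 0 ≤ a r) (hb : ∀ r ∈ s, 0 ≤ b r)
    (hh : ∀ x ∈ t, 0 ≤ h x) (hg : ∀ x ∈ t, 0 ≤ g x) (hu : MapsTo u s t) :
    ∀ r ∈ s, 0 ≤ radialSource a b h g u r := fun r hr =>
  add_nonneg (mul_nonneg (ha r hr) (hh _ (hu hr))) (mul_nonneg (hb r hr) (hg _ (hu hr)))

theorem monotoneOn_radialSource (ha_mono : MonotoneOn a s) (ha : ∀ r ∈ s, 0 ≤ a r)
    (hb_mono : MonotoneOn b s) (hb : ∀ r ∈ s, 0 ≤ b r)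
    (hh_mono : MonotoneOn h t) (hh : ∀ x ∈ t, 0 ≤ h x)
    (hg_mono : MonotoneOn g t) (hg : ∀ x ∈ t, 0 ≤ g x)
    (hu_mono : MonotoneOn u s) (hu : MapsTo u s t) :
    MonotoneOn (radialSource a b h g u) s :=
  (ha_mono.mul (hh_mono.comp hu_mono hu) ha fun _ hr => hh _ (hu hr)).add
    (hb_mono.mul (hg_mono.comp hu_mono hu) hb fun _ hr => hg _ (hu hr))

theorem continuousOn_radialSource (ha : ContinuousOn a s) (hb : ContinuousOn b s)
    (hh : ContinuousOn h t) (hg : ContinuousOn g t) (hu_cont : ContinuousOn u s)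
    (hu : MapsTo u s t) : ContinuousOn (radialSource a b h g u) s :=
  (ha.mul (hh.comp hu_cont hu)).add (hb.mul (hg.comp hu_cont hu))

end RadialSource

theorem monotoneOn_Ici_of_monotoneOn_Ioi {g : ℝ → ℝ} {s : ℝ} (hmono : MonotoneOn g (Ioi s))
    (hle : ∀ y ∈ Ioi s, g s ≤ g y) : MonotoneOn g (Ici s) := by
  intro x hx y hy hxy
  rcases (mem_Ici.1 hx).eq_or_lt with rfl | hx
  · rcases (mem_Ici.1 hy).eq_or_lt with rfl | hy
    · rfl
    · exact hle y hy
  · exact hmono hx (hx.trans_le hxy) hxy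

section RadialComparison

variable {k : ℕ} {v F : ℝ → ℝ} {r : ℝ}

theorem pow_mul_eq_integral_of_hasDerivAt (hr : 0 ≤ r) (hv : ContinuousOn v (Icc 0 r))
    (hv0 : v 0 = 0) (hderiv : ∀ x ∈ Ioo 0 r, HasDerivAt (fun x => x ^ k * v x) (x ^ k * F x) x)
    (hint : IntervalIntegrable (fun t => t ^ k * F t) volume 0 r) :
    r ^ k * v r = ∫ t in (0:ℝ)..r, t ^ k * F t := by
  rw [intervalIntegral.integral_eq_sub_of_hasDerivAt_of_le hr ((continuousOn_pow k).mul hv)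
    hderiv hint]
  simp [hv0]

theorem integral_pow_mul_le_of_monotoneOn (hr : 0 ≤ r) (hF : ContinuousOn F (Icc 0 r))
    (hmono : MonotoneOn F (Icc 0 r)) :
    ∫ t in (0:ℝ)..r, t ^ k * F t ≤ r ^ (k + 1) / (k + 1) * F r := by
  calc ∫ t in (0:ℝ)..r, t ^ k * F t ≤ ∫ t in (0:ℝ)..r, t ^ k * F r := by
        refine intervalIntegral.integral_mono_on hr ?_ ?_ fun t ht => ?_
        · exact ((continuousOn_pow k).mul hF).intervalIntegrable_of_Icc hr
        · exact ((continuous_pow k).mul continuous_const).intervalIntegrable 0 r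
        · exact mul_le_mul_of_nonneg_left (hmono ht ⟨hr, le_rfl⟩ ht.2) (pow_nonneg ht.1 k)
    _ = r ^ (k + 1) / (k + 1) * F r := by
        rw [intervalIntegral.integral_mul_const, integral_pow]
        simp

theorem le_mul_div_of_hasDerivAt_pow_mul (hr : 0 < r) (hv : ContinuousOn v (Icc 0 r))
    (hv0 : v 0 = 0) (hF : ContinuousOn F (Icc 0 r)) (hmono : MonotoneOn F (Icc 0 r))
    (hderiv : ∀ x ∈ Ioo 0 r, HasDerivAt (fun x => x ^ k * v x) (x ^ k * F x) x) :
    v r ≤ r * F r / (k + 1) := by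
  have hint := ((continuousOn_pow k).mul hF).intervalIntegrable_of_Icc (μ := volume) hr.le
  refine le_of_mul_le_mul_left ?_ (pow_pos hr k)
  calc r ^ k * v r = ∫ t in (0:ℝ)..r, t ^ k * F t :=
        pow_mul_eq_integral_of_hasDerivAt hr.le hv hv0 hderiv hint
    _ ≤ r ^ (k + 1) / (k + 1) * F r := integral_pow_mul_le_of_monotoneOn hr.le hF hmono
    _ = r ^ k * (r * F r / (k + 1)) := by ring

theorem div_le_of_hasDerivAt_pow_mul (hr : 0 < r) {v' : ℝ} (hv : HasDerivAt v v' r)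
    (hode : HasDerivAt (fun x => x ^ k * v x) (r ^ k * F r) r)
    (hle : v r ≤ r * F r / (k + 1)) : F r / (k + 1) ≤ v' := by
  have hprod : r ^ k * F r = k * r ^ (k - 1) * v r + r ^ k * v' :=
    hode.unique ((hasDerivAt_pow k r).mul hv)
  -- `k - 1` is truncated at `k = 0`, where both sides vanish.
  have hpow : (k : ℝ) * r ^ (k - 1) * r = k * r ^ k := by
    cases k <;> simp [pow_succ, mul_assoc]
  refine le_of_mul_le_mul_left ?_ (pow_pos hr (k + 1))
  have hexpand : r ^ (k + 1) * F r = k * r ^ k * v r + r ^ (k + 1) * v' := by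
    rw [← hpow, pow_succ]
    linear_combination r * hprod
  have hkv : (k : ℝ) * r ^ k * v r ≤ k * r ^ k * (r * F r / (k + 1)) :=
    mul_le_mul_of_nonneg_left hle (by positivity)
  calc r ^ (k + 1) * (F r / (k + 1))
      = r ^ (k + 1) * F r - k * r ^ k * (r * F r / (k + 1)) := by field_simp; ring
    _ ≤ r ^ (k + 1) * v' := by linarith

theorem div_le_deriv_of_hasDerivAt_pow_mul {v' : ℝ → ℝ} (hv : ContinuousOn v (Ici 0))
    (hv0 : v 0 = 0) (hv' : ∀ x, 0 < x → HasDerivAt v (v' x) x)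
    (hF : ContinuousOn F (Ici 0)) (hmono : MonotoneOn F (Ici 0))
    (hode : ∀ x, 0 < x → HasDerivAt (fun x => x ^ k * v x) (x ^ k * F x) x) (hr : 0 < r) :
    F r / (k + 1) ≤ v' r :=
  div_le_of_hasDerivAt_pow_mul hr (hv' r hr) (hode r hr) <|
    le_mul_div_of_hasDerivAt_pow_mul hr (hv.mono Icc_subset_Ici_self) hv0
      (hF.mono Icc_subset_Ici_self) (hmono.mono Icc_subset_Ici_self) fun x hx => hode x hx.1

end RadialComparison

theorem stmt9_general (N : ℕ) (hN : 3 ≤ N)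
    (a b : ℝ → ℝ)
    (ha_cont : ContinuousOn a (Set.Ici 0)) (ha_nonneg : ∀ s ∈ Set.Ici (0:ℝ), 0 ≤ a s)
    (hb_cont : ContinuousOn b (Set.Ici 0)) (hb_nonneg : ∀ s ∈ Set.Ici (0:ℝ), 0 ≤ b s)
    (h g : ℝ → ℝ) (s₀ : ℝ) (hs₀ : 0 < s₀)
    (hh_cont : ContinuousOn h (Set.Ici 0)) (hh_mono : MonotoneOn h (Set.Ici 0))
    (hh_nonneg : ∀ s ∈ Set.Ici (0:ℝ), 0 ≤ h s)
    (hg_cont : ContinuousOn g (Set.Ioi 0))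
    (hg_mono : MonotoneOn g (Set.Ioi s₀))
    (hg_s0 : g s₀ = 0)
    (hg_pos : ∀ s ∈ Set.Ioi s₀, 0 < g s)
    (u₀ : ℝ) (hu₀ : s₀ ≤ u₀)
    (ha_mono : MonotoneOn a (Set.Ici 0)) (hb_mono : MonotoneOn b (Set.Ici 0))
    (u u' u'' : ℝ → ℝ)
    (hu' : ∀ r ∈ Set.Ici (0:ℝ), HasDerivWithinAt u (u' r) (Set.Ici 0) r)
    (hu'' : ∀ r ∈ Set.Ici (0:ℝ), HasDerivWithinAt u' (u'' r) (Set.Ici 0) r)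
    (hu''_cont : ContinuousOn u'' (Set.Ici 0))
    (hu_mono : MonotoneOn u (Set.Ici 0))
    (hu_ge : ∀ r ∈ Set.Ici (0:ℝ), u₀ ≤ u r)
    (hode : ∀ r : ℝ, 0 < r →
      HasDerivAt (fun x : ℝ => x ^ (N - 1) * u' x)
        (r ^ (N - 1) * (a r * h (u r) + b r * g (u r))) r)
    (hu'0 : u' 0 = 0)
    :
    (∀ r : ℝ, 0 ≤ r → 0 ≤ u'' r) ∧
    (∀ r : ℝ, 0 < r →
      (1 / (N:ℝ)) * (a r * h (u r) + b r * g (u r)) ≤ u'' r) := by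
  obtain ⟨k, rfl⟩ : ∃ k, N = k + 1 := ⟨N - 1, by omega⟩
  have hu : MapsTo u (Ici 0) (Ici s₀) := fun r hr => hu₀.trans (hu_ge r hr)
  have hs₀_sub : Ici s₀ ⊆ Ici 0 := Ici_subset_Ici.2 hs₀.le
  have hg_mono' : MonotoneOn g (Ici s₀) :=
    monotoneOn_Ici_of_monotoneOn_Ioi hg_mono fun y hy => hg_s0 ▸ (hg_pos y hy).le
  have hg_nonneg : ∀ x ∈ Ici s₀, 0 ≤ g x := fun x hx => hg_s0 ▸ hg_mono' self_mem_Ici hx hx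
  have hh_nonneg' : ∀ x ∈ Ici s₀, 0 ≤ h x := fun x hx => hh_nonneg x (hs₀_sub hx)
  have hF_nonneg := radialSource_nonneg ha_nonneg hb_nonneg hh_nonneg' hg_nonneg hu
  have hF_mono := monotoneOn_radialSource ha_mono ha_nonneg hb_mono hb_nonneg
    (hh_mono.mono hs₀_sub) hh_nonneg' hg_mono' hg_nonneg hu_mono hu
  have hF_cont := continuousOn_radialSource ha_cont hb_cont (hh_cont.mono hs₀_sub)
    (hg_cont.mono fun x hx => hs₀.trans_le hx) (fun r hr => (hu' r hr).continuousWithinAt) hu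
  have hlower : ∀ r, 0 < r → radialSource a b h g u r / (k + 1) ≤ u'' r := fun r hr =>
    div_le_deriv_of_hasDerivAt_pow_mul (fun r hr => (hu'' r hr).continuousWithinAt) hu'0
      (fun r hr => (hu'' r hr.le).hasDerivAt (Ici_mem_nhds hr)) hF_cont hF_mono
      (by simp only [Nat.add_sub_cancel] at hode; exact hode) hr
  have hpos : ∀ r ∈ Ioi (0:ℝ), 0 ≤ u'' r := fun r hr =>
    (div_nonneg (hF_nonneg r (Ioi_subset_Ici_self hr)) (by positivity)).trans (hlower r hr)
  refine ⟨fun r hr => ?_, fun r hr => ?_⟩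
  · rcases hr.eq_or_lt with rfl | hr
    · exact ContinuousWithinAt.closure_le (by simp) continuousWithinAt_const
        ((hu''_cont 0 self_mem_Ici).mono Ioi_subset_Ici_self) hpos
    · exact hpos r hr
  · simpa [div_eq_inv_mul, radialSource] using hlower r hr

theorem stmt9 (N : ℕ) (hN : 3 ≤ N)
    (a b : ℝ → ℝ)
    (ha_cont : ContinuousOn a (Set.Ici 0)) (ha_nonneg : ∀ s ∈ Set.Ici (0:ℝ), 0 ≤ a s)
    (hb_cont : ContinuousOn b (Set.Ici 0)) (hb_nonneg : ∀ s ∈ Set.Ici (0:ℝ), 0 ≤ b s)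
    (h g : ℝ → ℝ) (s₀ : ℝ) (hs₀ : 0 < s₀)
    (hh_cont : ContinuousOn h (Set.Ici 0)) (hh_mono : MonotoneOn h (Set.Ici 0))
    (hh_nonneg : ∀ s ∈ Set.Ici (0:ℝ), 0 ≤ h s)
    (hh0 : h 0 = 0) (hh_pos : ∀ s : ℝ, 0 < s → 0 < h s)
    (hg_cont : ContinuousOn g (Set.Ioi 0))
    (hg_mono : MonotoneOn g (Set.Ioi s₀))
    (hg_lim : Filter.Tendsto g (nhdsWithin 0 (Set.Ioi 0)) (nhds 0))
    (hg_s0 : g s₀ = 0)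
    (hg_neg : ∀ s ∈ Set.Ioo 0 s₀, g s < 0)
    (hg_pos : ∀ s ∈ Set.Ioi s₀, 0 < g s)
    (u₀ : ℝ) (hu₀ : s₀ ≤ u₀)
    (ha_mono : MonotoneOn a (Set.Ici 0)) (hb_mono : MonotoneOn b (Set.Ici 0))
    (u u' u'' : ℝ → ℝ)
    (hu' : ∀ r ∈ Set.Ici (0:ℝ), HasDerivWithinAt u (u' r) (Set.Ici 0) r)
    (hu'' : ∀ r ∈ Set.Ici (0:ℝ), HasDerivWithinAt u' (u'' r) (Set.Ici 0) r)
    (hu''_cont : ContinuousOn u'' (Set.Ici 0))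
    (hu_mono : MonotoneOn u (Set.Ici 0))
    (hu_ge : ∀ r ∈ Set.Ici (0:ℝ), u₀ ≤ u r)
    (hode : ∀ r : ℝ, 0 < r →
      HasDerivAt (fun x : ℝ => x ^ (N - 1) * u' x)
        (r ^ (N - 1) * (a r * h (u r) + b r * g (u r))) r)
    (hu0 : u 0 = u₀) (hu'0 : u' 0 = 0)
    :
    (∀ r : ℝ, 0 ≤ r → 0 ≤ u'' r) ∧
    (∀ r : ℝ, 0 < r →
      (1 / (N:ℝ)) * (a r * h (u r) + b r * g (u r)) ≤ u'' r) :=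
  stmt9_general N hN a b ha_cont ha_nonneg hb_cont hb_nonneg h g s₀ hs₀ hh_cont hh_mono hh_nonneg
    hg_cont hg_mono hg_s0 hg_pos u₀ hu₀ ha_mono hb_mono u u' u'' hu' hu'' hu''_cont hu_mono hu_ge
    hode hu'0
end

section
/- Under hypotheses (h1), (g1), (O), with N ≥ 3, a, b nonnegative continuous functions on [0,∞), and u₀ ≥ s₀, no solution of the integral equation can blow up in finite radius: if R ∈ (0,∞] and u : [0,R) → ℝ is continuous with u ≥ u₀ and satisfies u(r) = u₀ + ∫₀^r t^{1-N} ∫₀^t s^{N-1} (a(s) h(u(s)) + b(s) g(u(s))) ds dt for all r ∈ [0,R), then H(u(r)) ≤ P̄(r) for all r ∈ [0,R); in particular, if R < ∞ then u does not tend to ∞ as r → R⁻. Here H(t) := ∫_{u₀}^t ds/(h(s)+g(s)) and P̄(r) := ∫₀^r t^{1-N} ∫₀^t s^{N-1} (a(s)+b(s)) ds dt. -/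
open MeasureTheory Filter Set intervalIntegral Topology

/-!
Since `a h(u) + b g(u) ≥ 0`, the solution is nondecreasing, so for `s ≤ x` the monotonicity of
`h` and `g` gives `a(s) h(u(s)) + b(s) g(u(s)) ≤ (h + g)(u(x)) (a(s) + b(s))`. In terms of the
radial flux `K f (t) = t^{1-N} ∫₀ᵗ s^{N-1} f(s) ds` this reads `u'(x) ≤ (h + g)(u(x)) P̄'(x)`,
and separating variables gives `H(u(r)) = ∫₀ʳ u'(x) / (h + g)(u(x)) dx ≤ P̄(r)`. If `R < ∞`,
then `P̄` is bounded on `[0, R]`, so `H(u)` stays bounded near `R` while `H(t) → ∞`; hence `u`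
cannot blow up at `R`.
-/

lemma continuousOn_primitive_of_continuousOn {f : ℝ → ℝ} {a b : ℝ} (hf : ContinuousOn f (Icc a b)) :
    ContinuousOn (fun x => ∫ t in a..x, f t) (Icc a b) := by
  rcases le_or_gt a b with hab | hab
  · simpa only [uIcc_of_le hab] using
      continuousOn_primitive_interval' (hf.intervalIntegrable_of_Icc hab) left_mem_uIcc
  · simp [Icc_eq_empty_of_lt hab]

lemma hasDerivAt_primitive_of_continuousOn {f : ℝ → ℝ} {a b x : ℝ}
    (hf : ContinuousOn f (Icc a b)) (hx : x ∈ Ioo a b) :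
    HasDerivAt (fun y => ∫ t in a..y, f t) (f x) x :=
  integral_hasDerivAt_right
    ((hf.mono (Icc_subset_Icc_right hx.2.le)).intervalIntegrable_of_Icc hx.1.le)
    ((hf.mono Ioo_subset_Icc_self).stronglyMeasurableAtFilter isOpen_Ioo x hx)
    (hf.continuousAt (Icc_mem_nhds hx.1 hx.2))

lemma monotoneOn_primitive {f : ℝ → ℝ} {a b : ℝ} (hf : IntervalIntegrable f volume a b)
    (hf0 : ∀ x ∈ Icc a b, 0 ≤ f x) : MonotoneOn (fun x => ∫ t in a..x, f t) (Icc a b) :=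
  fun _ hx _ hy hxy => integral_mono_interval le_rfl hx.1 hxy
    ((ae_restrict_iff' measurableSet_Ioc).2 (Eventually.of_forall
      fun t ht => hf0 t ⟨ht.1.le, ht.2.trans hy.2⟩))
    (hf.mono_set (uIcc_subset_uIcc left_mem_uIcc (mem_uIcc_of_le hy.1 hy.2)))

/-- Separation of variables in the differential inequality `u' ≤ φ(u) p`. -/
theorem integral_one_div_comp_le_integral {φ u v p : ℝ → ℝ} {a b : ℝ} (hab : a ≤ b)
    (hu : ContinuousOn u (Icc a b)) (hu' : ∀ x ∈ Ioo a b, HasDerivAt u (v x) x)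
    (hv : ContinuousOn v (Icc a b)) (hφ : ContinuousOn φ (u '' Icc a b))
    (hφ_pos : ∀ x ∈ Icc a b, 0 < φ (u x)) (hp : ContinuousOn p (Icc a b))
    (hvp : ∀ x ∈ Icc a b, v x ≤ φ (u x) * p x) :
    ∫ y in u a..u b, 1 / φ y ≤ ∫ x in a..b, p x := by
  have hq : ContinuousOn (fun y => 1 / φ y) (u '' Icc a b) :=
    continuousOn_const.div hφ (by rintro _ ⟨x, hx, rfl⟩; exact (hφ_pos x hx).ne')
  rw [← integral_comp_mul_deriv'' (by rwa [uIcc_of_le hab])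
    (fun x hx => (hu' x (by simpa [hab] using hx)).hasDerivWithinAt)
    (by rwa [uIcc_of_le hab]) (by rwa [uIcc_of_le hab])]
  refine integral_mono_on hab
    (((hq.comp hu (mapsTo_image _ _)).mul hv).intervalIntegrable_of_Icc hab)
    (hp.intervalIntegrable_of_Icc hab) fun x hx => ?_
  rw [Function.comp_apply, one_div_mul_eq_div, div_le_iff₀' (hφ_pos x hx)]
  exact hvp x hx

lemma monotoneOn_Ici_of_monotoneOn_Ioi_s17 {α β : Type*} [LinearOrder α] [Preorder β] {f : α → β}
    {a : α} (hf : MonotoneOn f (Ioi a)) (ha : ∀ x ∈ Ioi a, f a ≤ f x) : MonotoneOn f (Ici a) := by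
  intro x hx y hy hxy
  rcases (mem_Ici.1 hx).eq_or_lt with rfl | hx
  · rcases hxy.eq_or_lt with rfl | hxy
    · exact le_rfl
    · exact ha y hxy
  · exact hf hx (hx.trans_le hxy) hxy

lemma not_tendsto_atTop_of_eventually_comp_le {α β γ : Type*} [Preorder β] [Preorder γ]
    [NoMaxOrder γ] {l : Filter α} [l.NeBot] {H : β → γ} {u : α → β} {B : γ}
    (hH : Tendsto H atTop atTop) (hB : ∀ᶠ x in l, H (u x) ≤ B) : ¬ Tendsto u l atTop :=
  fun hu => (((hH.comp hu).eventually_gt_atTop B).and hB).exists.elim fun _ hx => hx.1.not_ge hx.2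

/-- If `u` is radial with `Δu = f`, then `u' = radialFlux N f`. -/
noncomputable def radialFlux (N : ℕ) (f : ℝ → ℝ) (t : ℝ) : ℝ :=
  t ^ (1 - (N : ℤ)) * ∫ s in (0 : ℝ)..t, s ^ (N - 1) * f s

section radialFlux

variable {N : ℕ} {f g : ℝ → ℝ} {r t : ℝ}

@[simp]
lemma radialFlux_apply_zero : radialFlux N f 0 = 0 := by
  simp [radialFlux]

lemma radialFlux_nonneg (ht : 0 ≤ t) (hf : ∀ s ∈ Icc 0 t, 0 ≤ f s) : 0 ≤ radialFlux N f t :=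
  mul_nonneg (zpow_nonneg ht _) <|
    integral_nonneg ht fun s hs => mul_nonneg (pow_nonneg hs.1 _) (hf s hs)

lemma radialFlux_le_radialFlux (ht : 0 ≤ t) (hf : ContinuousOn f (Icc 0 t))
    (hg : ContinuousOn g (Icc 0 t)) (hfg : ∀ s ∈ Icc 0 t, f s ≤ g s) :
    radialFlux N f t ≤ radialFlux N g t := by
  refine mul_le_mul_of_nonneg_left (integral_mono_on ht ?_ ?_ fun s hs => ?_) (zpow_nonneg ht _)
  · exact ((continuousOn_pow _).mul hf).intervalIntegrable_of_Icc ht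
  · exact ((continuousOn_pow _).mul hg).intervalIntegrable_of_Icc ht
  · exact mul_le_mul_of_nonneg_left (hfg s hs) (pow_nonneg hs.1 _)

lemma radialFlux_const_mul (c : ℝ) :
    radialFlux N (fun s => c * f s) t = c * radialFlux N f t := by
  simp only [radialFlux, mul_left_comm _ c, intervalIntegral.integral_const_mul]

lemma abs_radialFlux_le (hN : 1 ≤ N) (ht : 0 ≤ t) {C : ℝ} (hC : ∀ s ∈ Icc 0 t, |f s| ≤ C) :
    |radialFlux N f t| ≤ C * t := by
  rcases ht.eq_or_lt with rfl | ht
  · simp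
  have hint : ‖∫ s in (0 : ℝ)..t, s ^ (N - 1) * f s‖ ≤ t ^ (N - 1) * C * |t - 0| := by
    refine intervalIntegral.norm_integral_le_of_norm_le_const fun s hs => ?_
    rw [uIoc_of_le ht.le] at hs
    rw [Real.norm_eq_abs, abs_mul, abs_pow, abs_of_pos hs.1]
    exact mul_le_mul (pow_le_pow_left₀ hs.1.le hs.2 _) (hC s (Ioc_subset_Icc_self hs))
      (abs_nonneg _) (pow_nonneg ht.le _)
  have hpow : t ^ (1 - (N : ℤ)) * t ^ (N - 1) = 1 := by
    rw [← zpow_natCast, ← zpow_add₀ ht.ne', Nat.cast_sub hN]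
    simp
  calc |radialFlux N f t| = t ^ (1 - (N : ℤ)) * |∫ s in (0 : ℝ)..t, s ^ (N - 1) * f s| := by
        rw [radialFlux, abs_mul, abs_of_pos (zpow_pos ht _)]
    _ ≤ t ^ (1 - (N : ℤ)) * (t ^ (N - 1) * C * |t - 0|) := by rw [← Real.norm_eq_abs]; gcongr
    _ = C * t := by
        rw [sub_zero, abs_of_pos ht]
        linear_combination C * t * hpow

lemma continuousOn_radialFlux (hN : 1 ≤ N) (hf : ContinuousOn f (Icc 0 r)) :
    ContinuousOn (radialFlux N f) (Icc 0 r) := by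
  intro t ht
  rcases ht.1.eq_or_lt with rfl | ht0
  · obtain ⟨C, hC⟩ := isCompact_Icc.exists_bound_of_continuousOn hf
    rw [ContinuousWithinAt, radialFlux_apply_zero]
    have hCt : Tendsto (fun x => C * x) (𝓝[Icc 0 r] 0) (𝓝 0) := by
      simpa using ((tendsto_id (x := 𝓝 (0 : ℝ))).const_mul C).mono_left nhdsWithin_le_nhds
    refine squeeze_zero_norm' ?_ hCt
    filter_upwards [self_mem_nhdsWithin] with x hx
    exact abs_radialFlux_le hN hx.1 fun s hs => hC s ⟨hs.1, hs.2.trans hx.2⟩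
  · exact (continuousAt_zpow₀ t _ (Or.inl ht0.ne')).continuousWithinAt.mul
      (continuousOn_primitive_of_continuousOn ((continuousOn_pow _).mul hf) t ht)

end radialFlux

section IntegralEquation

variable {N : ℕ} {a b h g u : ℝ → ℝ} {u₀ r : ℝ}

theorem integral_one_div_add_le_integral_radialFlux (hN : 1 ≤ N) (hr : 0 ≤ r)
    (ha : ContinuousOn a (Icc 0 r)) (ha0 : ∀ s ∈ Icc 0 r, 0 ≤ a s)
    (hb : ContinuousOn b (Icc 0 r)) (hb0 : ∀ s ∈ Icc 0 r, 0 ≤ b s)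
    (hh : ContinuousOn h (Ici u₀)) (hh_mono : MonotoneOn h (Ici u₀))
    (hh0 : ∀ y ∈ Ici u₀, 0 ≤ h y)
    (hg : ContinuousOn g (Ici u₀)) (hg_mono : MonotoneOn g (Ici u₀))
    (hg0 : ∀ y ∈ Ici u₀, 0 ≤ g y) (hhg : ∀ y ∈ Ici u₀, 0 < h y + g y)
    (hu : ContinuousOn u (Icc 0 r)) (hu_ge : ∀ x ∈ Icc 0 r, u₀ ≤ u x)
    (hint : ∀ x ∈ Icc 0 r, u x =
      u₀ + ∫ t in (0 : ℝ)..x, radialFlux N (fun s => a s * h (u s) + b s * g (u s)) t) :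
    ∫ y in u₀..u r, 1 / (h y + g y) ≤
      ∫ t in (0 : ℝ)..r, radialFlux N (fun s => a s + b s) t := by
  set F := fun s => a s * h (u s) + b s * g (u s)
  have hF : ContinuousOn F (Icc 0 r) :=
    (ha.mul (hh.comp hu hu_ge)).add (hb.mul (hg.comp hu hu_ge))
  have hF0 : ∀ s ∈ Icc 0 r, 0 ≤ F s := fun s hs =>
    add_nonneg (mul_nonneg (ha0 s hs) (hh0 _ (hu_ge s hs)))
      (mul_nonneg (hb0 s hs) (hg0 _ (hu_ge s hs)))
  have hKF : ContinuousOn (radialFlux N F) (Icc 0 r) := continuousOn_radialFlux hN hF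
  have hu0 : u 0 = u₀ := by simpa using hint 0 (left_mem_Icc.2 hr)
  have hu_mono : MonotoneOn u (Icc 0 r) := by
    intro x hx y hy hxy
    rw [hint x hx, hint y hy]
    exact add_le_add le_rfl (monotoneOn_primitive (hKF.intervalIntegrable_of_Icc hr)
      (fun t ht => radialFlux_nonneg ht.1 fun s hs => hF0 s ⟨hs.1, hs.2.trans ht.2⟩) hx hy hxy)
  have hF_le : ∀ x ∈ Icc 0 r, ∀ s ∈ Icc 0 x, F s ≤ (h (u x) + g (u x)) * (a s + b s) := by
    intro x hx s hs
    have hs' : s ∈ Icc 0 r := ⟨hs.1, hs.2.trans hx.2⟩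
    have hus : u s ≤ u x := hu_mono hs' hx hs.2
    have hh_le := hh_mono (hu_ge s hs') (hu_ge x hx) hus
    have hg_le := hg_mono (hu_ge s hs') (hu_ge x hx) hus
    nlinarith [ha0 s hs', hb0 s hs', hh0 _ (hu_ge x hx), hg0 _ (hu_ge x hx)]
  have hab : ContinuousOn (fun s => a s + b s) (Icc 0 r) := ha.add hb
  rw [← hu0]
  refine integral_one_div_comp_le_integral hr hu
    (fun x hx => ?_) hKF ((hh.add hg).mono ?_) (fun x hx => hhg _ (hu_ge x hx))
    (continuousOn_radialFlux hN hab) fun x hx => ?_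
  · exact ((hasDerivAt_primitive_of_continuousOn hKF hx).const_add u₀).congr_of_eventuallyEq
      (eventually_of_mem (Icc_mem_nhds hx.1 hx.2) hint)
  · rintro _ ⟨x, hx, rfl⟩; exact hu_ge x hx
  · rw [← radialFlux_const_mul]
    exact radialFlux_le_radialFlux hx.1 (hF.mono (Icc_subset_Icc_right hx.2))
      (continuousOn_const.mul (hab.mono (Icc_subset_Icc_right hx.2))) (hF_le x hx)

end IntegralEquation

theorem stmt17_general (N : ℕ) (hN : 3 ≤ N)
    (a b : ℝ → ℝ)
    (ha_cont : ContinuousOn a (Set.Ici 0)) (ha_nonneg : ∀ s ∈ Set.Ici (0:ℝ), 0 ≤ a s)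
    (hb_cont : ContinuousOn b (Set.Ici 0)) (hb_nonneg : ∀ s ∈ Set.Ici (0:ℝ), 0 ≤ b s)
    (h g : ℝ → ℝ) (s₀ : ℝ) (hs₀ : 0 < s₀)
    (hh_cont : ContinuousOn h (Set.Ici 0)) (hh_mono : MonotoneOn h (Set.Ici 0))
    (hh_pos : ∀ s : ℝ, 0 < s → 0 < h s)
    (hg_cont : ContinuousOn g (Set.Ioi 0))
    (hg_mono : MonotoneOn g (Set.Ioi s₀))
    (hg_s0 : g s₀ = 0)
    (hg_pos : ∀ s ∈ Set.Ioi s₀, 0 < g s)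
    (u₀ : ℝ) (hu₀ : s₀ ≤ u₀)
    (hO : Filter.Tendsto (fun t : ℝ => ∫ s in u₀..t, 1 / (h s + g s)) Filter.atTop Filter.atTop)
    (R : ENNReal) (hR : 0 < R) (u : ℝ → ℝ)
    (hu_cont : ContinuousOn u {r : ℝ | 0 ≤ r ∧ ENNReal.ofReal r < R})
    (hu_ge : ∀ r : ℝ, 0 ≤ r → ENNReal.ofReal r < R → u₀ ≤ u r)
    (hint : ∀ r : ℝ, 0 ≤ r → ENNReal.ofReal r < R → u r =
      u₀ + ∫ t in (0:ℝ)..r, t ^ (1 - (N:ℤ)) *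
        ∫ s in (0:ℝ)..t, s ^ (N - 1) * (a s * h (u s) + b s * g (u s))) :
    (∀ r : ℝ, 0 ≤ r → ENNReal.ofReal r < R →
      (∫ s in u₀..(u r), 1 / (h s + g s)) ≤
        ∫ t in (0:ℝ)..r, t ^ (1 - (N:ℤ)) *
          ∫ s in (0:ℝ)..t, s ^ (N - 1) * (a s + b s)) ∧
    (R ≠ ⊤ → ¬ Filter.Tendsto u (nhdsWithin R.toReal (Set.Iio R.toReal))
      Filter.atTop) := by
  have hIci_pos : Ici u₀ ⊆ Ioi 0 := fun y hy => hs₀.trans_le (hu₀.trans hy)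
  have hg_mono' : MonotoneOn g (Ici s₀) :=
    monotoneOn_Ici_of_monotoneOn_Ioi_s17 hg_mono fun x hx => hg_s0 ▸ (hg_pos x hx).le
  have hg_nonneg : ∀ y ∈ Ici u₀, 0 ≤ g y := fun y hy =>
    hg_s0 ▸ hg_mono' self_mem_Ici (hu₀.trans hy) (hu₀.trans hy)
  have hbound : ∀ r : ℝ, 0 ≤ r → ENNReal.ofReal r < R →
      ∫ s in u₀..u r, 1 / (h s + g s) ≤ ∫ t in (0:ℝ)..r, radialFlux N (fun s => a s + b s) t := by
    intro r hr hrR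
    have hdom : Icc 0 r ⊆ {x | 0 ≤ x ∧ ENNReal.ofReal x < R} := fun x hx =>
      ⟨hx.1, (ENNReal.ofReal_le_ofReal hx.2).trans_lt hrR⟩
    exact integral_one_div_add_le_integral_radialFlux (by omega) hr
      (ha_cont.mono fun x hx => hx.1) (fun s hs => ha_nonneg s hs.1)
      (hb_cont.mono fun x hx => hx.1) (fun s hs => hb_nonneg s hs.1)
      (hh_cont.mono (hIci_pos.trans Ioi_subset_Ici_self))
      (hh_mono.mono (hIci_pos.trans Ioi_subset_Ici_self)) (fun y hy => (hh_pos y (hIci_pos hy)).le)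
      (hg_cont.mono hIci_pos) (hg_mono'.mono (Ici_subset_Ici.2 hu₀)) hg_nonneg
      (fun y hy => add_pos_of_pos_of_nonneg (hh_pos y (hIci_pos hy)) (hg_nonneg y hy))
      (hu_cont.mono hdom) (fun x hx => hu_ge x (hdom hx).1 (hdom hx).2)
      (fun x hx => hint x (hdom hx).1 (hdom hx).2)
  refine ⟨hbound, fun hR_top => ?_⟩
  have hT : 0 < R.toReal := ENNReal.toReal_pos hR.ne' hR_top
  obtain ⟨B, hB⟩ := isCompact_Icc.bddAbove_image <| continuousOn_primitive_of_continuousOn <|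
    continuousOn_radialFlux (N := N) (r := R.toReal) (by omega)
      ((ha_cont.mono fun x hx => hx.1).add (hb_cont.mono fun x hx => hx.1))
  refine not_tendsto_atTop_of_eventually_comp_le hO (B := B) ?_
  filter_upwards [Ioo_mem_nhdsLT hT] with x hx
  exact (hbound x hx.1.le ((ENNReal.ofReal_lt_iff_lt_toReal hx.1.le hR_top).2 hx.2)).trans
    (hB ⟨x, Ioo_subset_Icc_self hx, rfl⟩)

theorem stmt17 (N : ℕ) (hN : 3 ≤ N)
    (a b : ℝ → ℝ)
    (ha_cont : ContinuousOn a (Set.Ici 0)) (ha_nonneg : ∀ s ∈ Set.Ici (0:ℝ), 0 ≤ a s)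
    (hb_cont : ContinuousOn b (Set.Ici 0)) (hb_nonneg : ∀ s ∈ Set.Ici (0:ℝ), 0 ≤ b s)
    (h g : ℝ → ℝ) (s₀ : ℝ) (hs₀ : 0 < s₀)
    (hh_cont : ContinuousOn h (Set.Ici 0)) (hh_mono : MonotoneOn h (Set.Ici 0))
    (hh_nonneg : ∀ s ∈ Set.Ici (0:ℝ), 0 ≤ h s)
    (hh0 : h 0 = 0) (hh_pos : ∀ s : ℝ, 0 < s → 0 < h s)
    (hg_cont : ContinuousOn g (Set.Ioi 0))
    (hg_mono : MonotoneOn g (Set.Ioi s₀))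
    (hg_lim : Filter.Tendsto g (nhdsWithin 0 (Set.Ioi 0)) (nhds 0))
    (hg_s0 : g s₀ = 0)
    (hg_neg : ∀ s ∈ Set.Ioo 0 s₀, g s < 0)
    (hg_pos : ∀ s ∈ Set.Ioi s₀, 0 < g s)
    (u₀ : ℝ) (hu₀ : s₀ ≤ u₀)
    (hO : Filter.Tendsto (fun t : ℝ => ∫ s in u₀..t, 1 / (h s + g s)) Filter.atTop Filter.atTop)
    (R : ENNReal) (hR : 0 < R) (u : ℝ → ℝ)
    (hu_cont : ContinuousOn u {r : ℝ | 0 ≤ r ∧ ENNReal.ofReal r < R})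
    (hu_ge : ∀ r : ℝ, 0 ≤ r → ENNReal.ofReal r < R → u₀ ≤ u r)
    (hint : ∀ r : ℝ, 0 ≤ r → ENNReal.ofReal r < R → u r =
      u₀ + ∫ t in (0:ℝ)..r, t ^ (1 - (N:ℤ)) *
        ∫ s in (0:ℝ)..t, s ^ (N - 1) * (a s * h (u s) + b s * g (u s))) :
    (∀ r : ℝ, 0 ≤ r → ENNReal.ofReal r < R →
      (∫ s in u₀..(u r), 1 / (h s + g s)) ≤
        ∫ t in (0:ℝ)..r, t ^ (1 - (N:ℤ)) *
          ∫ s in (0:ℝ)..t, s ^ (N - 1) * (a s + b s)) ∧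
    (R ≠ ⊤ → ¬ Filter.Tendsto u (nhdsWithin R.toReal (Set.Iio R.toReal))
      Filter.atTop) :=
  stmt17_general N hN a b ha_cont ha_nonneg hb_cont hb_nonneg h g s₀ hs₀ hh_cont hh_mono hh_pos
    hg_cont hg_mono hg_s0 hg_pos u₀ hu₀ hO R hR u hu_cont hu_ge hint
end
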